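/- Let f : ℝⁿ → ℝ be differentiable with L-Lipschitz gradient, bounded below by f* ∈ ℝ, and let zᵏ⁺¹ = zᵏ − β∇f(zᵏ) with 0 < β ≤ 1/L. Then ∑_{k=0}^{∞} ‖∇f(zᵏ)‖² < ∞, and in particular ‖∇f(zᵏ)‖ → 0 as k → ∞. -/

import Mathlib

/-!
Since the slope of `t ↦ f (x + t • v)` grows by at most `L * t * ‖v‖ ^ 2` on `[0, 1]`, the descent
lemma `f (x + v) ≤ f x + ⟪∇f x, v⟫ + L / 2 * ‖v‖ ^ 2` holds. Along the iterates it gives the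
sufficient decrease `f (z (k + 1)) ≤ f (z k) - β / 2 * ‖∇f (z k)‖ ^ 2` as soon as `L * β ≤ 1`.
Summing telescopes, so the partial sums of `β / 2 * ‖∇f (z k)‖ ^ 2` are bounded by
`f (z 0) - fstar`.
-/

open InnerProductSpace Set Filter

section GradientLipschitz

variable {F : Type*} [NormedAddCommGroup F] [InnerProductSpace ℝ F] [CompleteSpace F]
  {f : F → ℝ} {L : ℝ}

theorem HasGradientAt.hasDerivAt_comp_add_smul {x v : F} {t : ℝ} {g : F}
    (h : HasGradientAt f g (x + t • v)) :
    HasDerivAt (fun s : ℝ => f (x + s • v)) ⟪g, v⟫_ℝ t := by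
  have hline : HasDerivAt (fun s : ℝ => x + s • v) v t := by
    simpa using ((hasDerivAt_id t).smul_const v).const_add x
  simpa [Function.comp_def] using h.hasFDerivAt.comp_hasDerivAt t hline

theorem le_add_inner_gradient_add_sq_of_lipschitz (hf : Differentiable ℝ f)
    (hlip : ∀ x y, ‖gradient f x - gradient f y‖ ≤ L * ‖x - y‖) (x v : F) :
    f (x + v) ≤ f x + ⟪gradient f x, v⟫_ℝ + L / 2 * ‖v‖ ^ 2 := by
  have hφ (t : ℝ) : HasDerivAt (fun s : ℝ => f (x + s • v)) ⟪gradient f (x + t • v), v⟫_ℝ t :=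
    (hf _).hasGradientAt.hasDerivAt_comp_add_smul
  have hB (t : ℝ) : HasDerivAt (fun s : ℝ => f x + s * ⟪gradient f x, v⟫_ℝ + L / 2 * s ^ 2 * ‖v‖ ^ 2)
      (⟪gradient f x, v⟫_ℝ + L * t * ‖v‖ ^ 2) t := by
    exact ((((hasDerivAt_id' t).mul_const ⟪gradient f x, v⟫_ℝ).const_add (f x)).add
      (((hasDerivAt_pow 2 t).const_mul (L / 2)).mul_const (‖v‖ ^ 2))).congr_deriv (by ring)
  have hslope : ∀ t ∈ Ico (0 : ℝ) 1,
      ⟪gradient f (x + t • v), v⟫_ℝ ≤ ⟪gradient f x, v⟫_ℝ + L * t * ‖v‖ ^ 2 := by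
    rintro t ⟨ht, -⟩
    have hdiff : ‖gradient f (x + t • v) - gradient f x‖ ≤ L * (t * ‖v‖) := by
      simpa [norm_smul, abs_of_nonneg ht] using hlip (x + t • v) x
    calc ⟪gradient f (x + t • v), v⟫_ℝ
        = ⟪gradient f x, v⟫_ℝ + ⟪gradient f (x + t • v) - gradient f x, v⟫_ℝ := by
          rw [inner_sub_left]; ring
      _ ≤ ⟪gradient f x, v⟫_ℝ + ‖gradient f (x + t • v) - gradient f x‖ * ‖v‖ := by
          gcongr; exact real_inner_le_norm _ _
      _ ≤ ⟪gradient f x, v⟫_ℝ + L * (t * ‖v‖) * ‖v‖ := by gcongr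
      _ = ⟪gradient f x, v⟫_ℝ + L * t * ‖v‖ ^ 2 := by ring
  have := image_le_of_deriv_right_le_deriv_boundary
    (fun t _ => (hφ t).continuousAt.continuousWithinAt) (fun t _ => (hφ t).hasDerivWithinAt)
    (by simp) (fun t _ => (hB t).continuousAt.continuousWithinAt)
    (fun t _ => (hB t).hasDerivWithinAt) hslope (right_mem_Icc.2 zero_le_one)
  simpa using this

theorem le_sub_sq_norm_gradient_of_lipschitz (hf : Differentiable ℝ f)
    (hlip : ∀ x y, ‖gradient f x - gradient f y‖ ≤ L * ‖x - y‖) {β : ℝ} (hβ : 0 ≤ β)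
    (hβL : L * β ≤ 1) (x : F) :
    f (x - β • gradient f x) ≤ f x - β / 2 * ‖gradient f x‖ ^ 2 := by
  have h := le_add_inner_gradient_add_sq_of_lipschitz hf hlip x (-(β • gradient f x))
  rw [← sub_eq_add_neg, inner_neg_right, real_inner_smul_right, real_inner_self_eq_norm_sq,
    norm_neg, norm_smul, Real.norm_of_nonneg hβ] at h
  have : L * β * β ≤ β := by nlinarith
  nlinarith [sq_nonneg ‖gradient f x‖]

end GradientLipschitz

theorem summable_of_mul_le_sub_succ {u a : ℕ → ℝ} {c m : ℝ} (hc : 0 < c) (hu : ∀ k, 0 ≤ u k)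
    (hdec : ∀ k, c * u k ≤ a k - a (k + 1)) (hbdd : ∀ k, m ≤ a k) : Summable u := by
  refine (summable_mul_left_iff hc.ne').1 <|
    summable_of_sum_range_le (c := a 0 - m) (fun k => mul_nonneg hc.le (hu k)) fun N => ?_
  calc ∑ k ∈ Finset.range N, c * u k
      ≤ ∑ k ∈ Finset.range N, (a k - a (k + 1)) := Finset.sum_le_sum fun k _ => hdec k
    _ = a 0 - a N := Finset.sum_range_sub' a N
    _ ≤ a 0 - m := by linarith [hbdd N]

theorem tendsto_norm_zero_of_summable_sq {E : Type*} [SeminormedAddCommGroup E] {x : ℕ → E}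
    (h : Summable fun k => ‖x k‖ ^ 2) : Tendsto (fun k => ‖x k‖) atTop (nhds 0) := by
  simpa [Real.sqrt_sq (norm_nonneg _)] using h.tendsto_atTop_zero.sqrt

theorem gradient_descent_grad_square_summable (n : ℕ)
    (f : EuclideanSpace ℝ (Fin n) → ℝ) (L β fstar : ℝ)
    (hf : Differentiable ℝ f)
    (hlip : ∀ x y, ‖gradient f x - gradient f y‖ ≤ L * ‖x - y‖)
    (hbdd : ∀ x, fstar ≤ f x)
    (hβ : 0 < β) (hβL : β ≤ 1 / L)
    (z : ℕ → EuclideanSpace ℝ (Fin n))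
    (hz : ∀ k, z (k + 1) = z k - β • gradient f (z k)) :
    Summable (fun k => ‖gradient f (z k)‖ ^ 2) ∧
      Filter.Tendsto (fun k => ‖gradient f (z k)‖) Filter.atTop (nhds 0) := by
  have hL : 0 < L := one_div_pos.1 (hβ.trans_le hβL)
  have hLβ : L * β ≤ 1 := by rwa [le_div_iff₀ hL, mul_comm] at hβL
  have hdecrease (k : ℕ) : β / 2 * ‖gradient f (z k)‖ ^ 2 ≤ f (z k) - f (z (k + 1)) := by
    have := le_sub_sq_norm_gradient_of_lipschitz hf hlip hβ.le hLβ (z k)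
    rw [hz k]
    linarith
  have hsum : Summable fun k => ‖gradient f (z k)‖ ^ 2 :=
    summable_of_mul_le_sub_succ (half_pos hβ) (fun _ => sq_nonneg _) hdecrease (fun k => hbdd (z k))
  exact ⟨hsum, tendsto_norm_zero_of_summable_sq hsum⟩
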